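/- arXiv:2206.09263 — 2 statements merged into one kernel-verified Lean document; each statement's English description precedes it below -/
import Mathlib

section
/- For fixed m ≥ 1, the Erlang C probability c(R) = (mR)^m / ( m!(1-R)·Σ_{k=0}^{m-1} (mR)^k/k! + (mR)^m ) is strictly monotonically increasing in R on the interval (0,1). -/
noncomputable def erlangC (m : ℕ) (R : ℝ) : ℝ :=
  (m * R) ^ m /
    ((m.factorial : ℝ) * (1 - R) * (∑ k ∈ Finset.range m, (m * R) ^ k / (k.factorial : ℝ))
      + (m * R) ^ m)

theorem erlangC_strictMonoOn (m : ℕ) (hm : 1 ≤ m) :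
    StrictMonoOn (erlangC m) (Set.Ioo (0 : ℝ) 1) := by
  intro x hx y hy hxy
  obtain ⟨hx0, hx1⟩ := hx
  obtain ⟨hy0, hy1⟩ := hy
  have hm0 : (0 : ℝ) < m := by exact_mod_cast Nat.lt_of_lt_of_le Nat.zero_lt_one hm
  have hax : 0 < (m : ℝ) * x := mul_pos hm0 hx0
  have hay : 0 < (m : ℝ) * y := mul_pos hm0 hy0
  set Sx : ℝ := ∑ k ∈ Finset.range m, ((m : ℝ) * x) ^ k / (k.factorial : ℝ) with hSx
  set Sy : ℝ := ∑ k ∈ Finset.range m, ((m : ℝ) * y) ^ k / (k.factorial : ℝ) with hSy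
  have hne : (Finset.range m).Nonempty := Finset.nonempty_range_iff.mpr (by omega)
  have hSxpos : 0 < Sx := Finset.sum_pos (fun k _ => div_pos (pow_pos hax k)
    (by exact_mod_cast k.factorial_pos)) hne
  have hSypos : 0 < Sy := Finset.sum_pos (fun k _ => div_pos (pow_pos hay k)
    (by exact_mod_cast k.factorial_pos)) hne
  have hfac : (0 : ℝ) < (m.factorial : ℝ) := by exact_mod_cast m.factorial_pos
  have key : Sy * ((m : ℝ) * x) ^ m * (1 - y) < Sx * ((m : ℝ) * y) ^ m * (1 - x) := by
    rw [hSx, hSy, Finset.sum_mul, Finset.sum_mul, Finset.sum_mul, Finset.sum_mul]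
    apply Finset.sum_lt_sum_of_nonempty hne
    intro k hk
    have hk' : k < m := Finset.mem_range.mp hk
    have hpow : ((m : ℝ) * x) ^ (m - k) < ((m : ℝ) * y) ^ (m - k) :=
      pow_lt_pow_left₀ (by nlinarith) (le_of_lt hax) (by omega)
    have h1 : ((m : ℝ) * y) ^ k * ((m : ℝ) * x) ^ m <
        ((m : ℝ) * x) ^ k * ((m : ℝ) * y) ^ m := by
      have ex : ((m : ℝ) * x) ^ m = ((m : ℝ) * x) ^ k * ((m : ℝ) * x) ^ (m - k) := by
        rw [← pow_add]; congr 1; omega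
      have ey : ((m : ℝ) * y) ^ m = ((m : ℝ) * y) ^ k * ((m : ℝ) * y) ^ (m - k) := by
        rw [← pow_add]; congr 1; omega
      rw [ex, ey]
      nlinarith [mul_pos (pow_pos hax k) (pow_pos hay k), hpow,
        pow_pos hax k, pow_pos hay k, pow_pos hax (m - k), pow_pos hay (m - k)]
    have hkfac : (0 : ℝ) < (k.factorial : ℝ) := by exact_mod_cast k.factorial_pos
    rw [div_mul_eq_mul_div, div_mul_eq_mul_div, div_mul_eq_mul_div, div_mul_eq_mul_div,
      div_lt_div_iff₀ hkfac hkfac]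
    have h2 : (0 : ℝ) < ((m : ℝ) * y) ^ k * ((m : ℝ) * x) ^ m :=
      mul_pos (pow_pos hay k) (pow_pos hax m)
    have h3 : ((m : ℝ) * y) ^ k * ((m : ℝ) * x) ^ m * (1 - y) <
        ((m : ℝ) * x) ^ k * ((m : ℝ) * y) ^ m * (1 - x) := by
      nlinarith [mul_lt_mul_of_pos_right h1 (show (0:ℝ) < 1 - x by linarith),
        mul_pos h2 (show (0:ℝ) < y - x by linarith)]
    exact mul_lt_mul_of_pos_right h3 hkfac
  unfold erlangC
  have hDx : 0 < (m.factorial : ℝ) * (1 - x) * Sx + ((m : ℝ) * x) ^ m := by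
    have := mul_pos (mul_pos hfac (by linarith : (0:ℝ) < 1 - x)) hSxpos
    have := pow_pos hax m
    push_cast
    nlinarith
  have hDy : 0 < (m.factorial : ℝ) * (1 - y) * Sy + ((m : ℝ) * y) ^ m := by
    have := mul_pos (mul_pos hfac (by linarith : (0:ℝ) < 1 - y)) hSypos
    have := pow_pos hay m
    push_cast
    nlinarith
  rw [div_lt_div_iff₀ (by push_cast at hDx ⊢; exact hDx) (by push_cast at hDy ⊢; exact hDy)]
  push_cast
  nlinarith [mul_lt_mul_of_pos_left key hfac, pow_pos hax m, pow_pos hay m]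
end

section
/- If the loads satisfy 0 < R_{i-1} < R_i < 1 for fixed m, then the Erlang C values satisfy c(R_{i-1}) < c(R_i), hence the approximate number of preemptions h_i = Λ_i(c(R_i) - c(R_{i-1}))/λ_i is strictly positive for Λ_i, λ_i > 0. -/
lemma erlangC_strictMono (m : ℕ) (hm : 1 ≤ m) {a b : ℝ}
    (ha : 0 < a) (hab : a < b) (hb1 : b < 1) :
    erlangC m a < erlangC m b := by
  have hb : 0 < b := ha.trans hab
  have ha1 : a < 1 := hab.trans hb1
  have hmR : (0:ℝ) < m := by exact_mod_cast Nat.lt_of_lt_of_le Nat.zero_lt_one hm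
  have hxa : (0:ℝ) < (m * a) ^ m := by positivity
  have hxb : (0:ℝ) < (m * b) ^ m := by positivity
  set Sa := ∑ k ∈ Finset.range m, (m * a) ^ k / (k.factorial : ℝ) with hSa
  set Sb := ∑ k ∈ Finset.range m, (m * b) ^ k / (k.factorial : ℝ) with hSb
  have hSa0 : 0 ≤ Sa := by
    apply Finset.sum_nonneg; intro k _; positivity
  have hSb0 : 0 ≤ Sb := by
    apply Finset.sum_nonneg; intro k _; positivity
  have hDa : 0 ≤ (m.factorial : ℝ) * (1 - a) * Sa := by
    have : (0:ℝ) ≤ 1 - a := by linarith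
    positivity
  have hDb : 0 ≤ (m.factorial : ℝ) * (1 - b) * Sb := by
    have : (0:ℝ) ≤ 1 - b := by linarith
    positivity
  have hsum : ∑ k ∈ Finset.range m,
        (m.factorial : ℝ) * ((1 - b) * ((m * a) ^ m * ((m * b) ^ k / (k.factorial : ℝ))))
      < ∑ k ∈ Finset.range m,
        (m.factorial : ℝ) * ((1 - a) * ((m * b) ^ m * ((m * a) ^ k / (k.factorial : ℝ)))) := by
    apply Finset.sum_lt_sum_of_nonempty
    · exact Finset.nonempty_range_iff.mpr (by omega)
    · intro k hk
      have hkm : k < m := Finset.mem_range.mp hk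
      have hfact : (0:ℝ) < (k.factorial : ℝ) := by positivity
      have core : (1 - b) * ((m * a) ^ m * (m * b) ^ k)
          < (1 - a) * ((m * b) ^ m * (m * a) ^ k) := by
        have epa : (m * a) ^ m = (m * a) ^ k * (m * a) ^ (m - k) := by
          rw [← pow_add]; congr 1; omega
        have epb : (m * b) ^ m = (m * b) ^ k * (m * b) ^ (m - k) := by
          rw [← pow_add]; congr 1; omega
        have hpow : (m * a) ^ (m - k) < (m * b) ^ (m - k) := by
          apply pow_lt_pow_left₀ _ (by positivity) (by omega)
          have := hmR
          nlinarith
        have h1 : (1 - b) * (m * a) ^ (m - k) < (1 - a) * (m * b) ^ (m - k) := by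
          apply mul_lt_mul'' (by linarith) hpow (by linarith) (by positivity)
        have hpos : (0:ℝ) < (m * a) ^ k * (m * b) ^ k := by positivity
        calc (1 - b) * ((m * a) ^ m * (m * b) ^ k)
            = ((1 - b) * (m * a) ^ (m - k)) * ((m * a) ^ k * (m * b) ^ k) := by
              rw [epa]; ring
          _ < ((1 - a) * (m * b) ^ (m - k)) * ((m * a) ^ k * (m * b) ^ k) :=
              mul_lt_mul_of_pos_right h1 hpos
          _ = (1 - a) * ((m * b) ^ m * (m * a) ^ k) := by rw [epb]; ring
      have e1 : (m.factorial : ℝ) * ((1 - b) * ((m * a) ^ m * ((m * b) ^ k / (k.factorial : ℝ))))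
          = (m.factorial : ℝ) * ((1 - b) * ((m * a) ^ m * (m * b) ^ k)) / (k.factorial : ℝ) := by
        ring
      have e2 : (m.factorial : ℝ) * ((1 - a) * ((m * b) ^ m * ((m * a) ^ k / (k.factorial : ℝ))))
          = (m.factorial : ℝ) * ((1 - a) * ((m * b) ^ m * (m * a) ^ k)) / (k.factorial : ℝ) := by
        ring
      rw [e1, e2, div_lt_div_iff_of_pos_right hfact]
      have hmf : (0:ℝ) < (m.factorial : ℝ) := by positivity
      exact mul_lt_mul_of_pos_left core hmf
  have eL : (m * a) ^ m * ((m.factorial : ℝ) * (1 - b) * Sb)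
      = ∑ k ∈ Finset.range m,
        (m.factorial : ℝ) * ((1 - b) * ((m * a) ^ m * ((m * b) ^ k / (k.factorial : ℝ)))) := by
    rw [hSb]
    simp only [Finset.mul_sum]
    exact Finset.sum_congr rfl (fun k _ => by ring)
  have eR : (m * b) ^ m * ((m.factorial : ℝ) * (1 - a) * Sa)
      = ∑ k ∈ Finset.range m,
        (m.factorial : ℝ) * ((1 - a) * ((m * b) ^ m * ((m * a) ^ k / (k.factorial : ℝ)))) := by
    rw [hSa]
    simp only [Finset.mul_sum]
    exact Finset.sum_congr rfl (fun k _ => by ring)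
  have hcross : (m * a) ^ m * ((m.factorial : ℝ) * (1 - b) * Sb)
      < (m * b) ^ m * ((m.factorial : ℝ) * (1 - a) * Sa) := by
    rw [eL, eR]; exact hsum
  unfold erlangC
  rw [div_lt_div_iff₀ (by linarith) (by linarith)]
  nlinarith [mul_comm ((m * a) ^ m) ((m * b) ^ m)]

theorem preemptions_pos (m : ℕ) (hm : 1 ≤ m)
    (Rim1 Ri Lam lam h : ℝ)
    (hR0 : 0 < Rim1) (hRR : Rim1 < Ri) (hR1 : Ri < 1)
    (hLam : 0 < Lam) (hlam : 0 < lam)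
    (hh : h = Lam * (erlangC m Ri - erlangC m Rim1) / lam) :
    erlangC m Rim1 < erlangC m Ri ∧ 0 < h := by
  have key := erlangC_strictMono m hm hR0 hRR hR1
  refine ⟨key, ?_⟩
  rw [hh]
  exact div_pos (mul_pos hLam (sub_pos.mpr key)) hlam
end
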